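/- For all m, q ∈ ℕ₀, λ ∈ ℂ and z ∈ (−1,1), the operator U^q_m defined by (U^q_m f)(z) := (−1)^q (1−z²)^{(m+q)/2} (d^q/dz^q)[(1−z²)^{−m/2} f(z)] raises the order of the associated Legendre function of general degree: (U^q_m P^m_λ)(z) = P^{m+q}_λ(z). -/

import Mathlib

open scoped BigOperators

/-- The Gauss hypergeometric function `₂F₁(a,b;c;x)` as a power series. -/
noncomputable def hyp2F1 (a b c x : ℂ) : ℂ :=
  ∑' n : ℕ, ((ascPochhammer ℂ n).eval a * (ascPochhammer ℂ n).eval b /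
    ((ascPochhammer ℂ n).eval c * (n.factorial : ℂ))) * x ^ n

/-- The associated Legendre function `P^m_λ` of general degree `λ` and order `m ∈ ℕ`. -/
noncomputable def PLeg (m : ℕ) (lam : ℂ) (z : ℝ) : ℂ :=
  ((ascPochhammer ℂ m).eval (-lam) * (ascPochhammer ℂ m).eval (1 + lam) / (m.factorial : ℂ)) *
    (((1 - z) / (1 + z) : ℂ)) ^ ((m : ℂ) / 2) *
    hyp2F1 (-lam) (lam + 1) (1 + (m : ℂ)) (((1 - z) / 2 : ℝ) : ℂ)

/-- The order-raising operator `U^q_m`. -/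
noncomputable def Uop (m q : ℕ) (f : ℝ → ℂ) (z : ℝ) : ℂ :=
  (-1 : ℂ) ^ q * ((1 - (z : ℂ) ^ 2)) ^ (((m + q : ℕ) : ℂ) / 2) *
    iteratedDeriv q (fun x : ℝ => ((1 - (x : ℂ) ^ 2)) ^ (-(m : ℂ) / 2) * f x) z

/-!
On `(-1, 1)` the weighted function `g_m(z) := (1 - z²)^{-m/2} P^m_λ(z)` equals
`K_m (1 + z)^{-m} F((1 - z)/2)`, where `K_m` is the Pochhammer prefactor of `P^m_λ` and
`F = ₂F₁(a, b; c; ·)` with `a = -λ`, `b = λ + 1`, `c = 1 + m`. Since `c - a - b = m`, Gauss'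
contiguous relation `(1 - t) F'(t) + (c - a - b) F(t) = (c - a)(c - b)/c · ₂F₁(a, b; c + 1; t)`
turns the derivative of `g_m` into `-g_{m+1}`, the constants matching because
`K_{m+1} = K_m (c - a)(c - b)/c`. Hence `g_m^{(q)} = (-1)^q g_{m+q}`, and the prefactor of `U^q_m`
removes the weight again.
-/

open FormalMultilinearSeries Filter Topology

theorem hasSum_deriv_ofScalarsSum {𝕜 : Type*} [NontriviallyNormedField 𝕜] [CompleteSpace 𝕜]
    {c : ℕ → 𝕜} {x : 𝕜} (hx : ‖x‖ₑ < (ofScalars 𝕜 c).radius) :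
    HasSum (fun n => (n + 1) * c (n + 1) * x ^ n) (deriv (ofScalarsSum c) x) := by
  set p := ofScalars 𝕜 c
  have hsum : HasSum (fun n => p.derivSeries n (fun _ => x)) (p.derivSeries.sum x) :=
    p.derivSeries.hasSum (by simpa using hx.trans_le p.radius_le_radius_derivSeries)
  rw [show ofScalarsSum c = p.sum from rfl, (p.hasFDerivAt_sum hx).hasDerivAt.deriv]
  refine (hsum.mapL (ContinuousLinearMap.apply 𝕜 𝕜 1)).congr_fun fun n => ?_
  simp only [ContinuousLinearMap.apply_apply, apply_eq_pow_smul_coeff, _root_.smul_apply,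
    derivSeries_coeff_one, p, coeff_ofScalars, smul_eq_mul, nsmul_eq_mul, Nat.cast_succ]
  ring

section Hypergeometric

variable {𝕜 : Type*}

theorem ordinaryHypergeometricCoefficient_contiguous [Field 𝕜] [CharZero 𝕜] (a b c : 𝕜)
    (hc : ∀ k : ℕ, (k : 𝕜) ≠ -c) (n : ℕ) :
    (n + 1) * ordinaryHypergeometricCoefficient a b c (n + 1)
      + (c - a - b - n) * ordinaryHypergeometricCoefficient a b c n
    = (c - a) * (c - b) / c * ordinaryHypergeometricCoefficient a b (c + 1) n := by
  have hc0 : c ≠ 0 := fun h => hc 0 (by simp [h])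
  have hcn : c + n ≠ 0 := fun h => hc n (by linear_combination h)
  have hpoch : (ascPochhammer 𝕜 n).eval c ≠ 0 := fun h => by
    obtain ⟨k, -, hk⟩ := (ascPochhammer_eval_eq_zero_iff n c).1 h
    exact hc k hk
  have hshift : (ascPochhammer 𝕜 n).eval (c + 1) = (ascPochhammer 𝕜 n).eval c * (c + n) / c := by
    rw [eq_div_iff hc0, ← ascPochhammer_succ_eval, ascPochhammer_succ_left]
    simp [mul_comm]
  simp only [ordinaryHypergeometricCoefficient, ascPochhammer_succ_eval, hshift,
    Nat.factorial_succ, Nat.cast_mul, Nat.cast_succ]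
  field_simp
  ring

variable [RCLike 𝕜] (a b c : 𝕜)

theorem one_le_radius_ordinaryHypergeometricSeries (hc : ∀ k : ℕ, (k : 𝕜) ≠ -c) :
    1 ≤ (ordinaryHypergeometricSeries 𝕜 a b c).radius := by
  by_cases hab : ∃ k : ℕ, (k : 𝕜) = -a ∨ (k : 𝕜) = -b
  · obtain ⟨k, hk | hk⟩ := hab
    · rw [neg_eq_iff_eq_neg.1 hk.symm, ordinaryHypergeometric_radius_top_of_neg_nat₁]
      exact le_top
    · rw [neg_eq_iff_eq_neg.1 hk.symm, ordinaryHypergeometric_radius_top_of_neg_nat₂]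
      exact le_top
  · push Not at hab
    exact (ordinaryHypergeometricSeries_radius_eq_one 𝕜 a b c
      fun k => ⟨(hab k).1, (hab k).2, hc k⟩).ge

theorem enorm_lt_radius_ordinaryHypergeometricSeries (hc : ∀ k : ℕ, (k : 𝕜) ≠ -c) {x : 𝕜}
    (hx : ‖x‖ < 1) : ‖x‖ₑ < (ordinaryHypergeometricSeries 𝕜 a b c).radius :=
  lt_of_lt_of_le (by rw [enorm_eq_nnnorm, ENNReal.coe_lt_one_iff]; exact_mod_cast hx)
    (one_le_radius_ordinaryHypergeometricSeries a b c hc)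

theorem hasSum_ordinaryHypergeometric (hc : ∀ k : ℕ, (k : 𝕜) ≠ -c) {x : 𝕜} (hx : ‖x‖ < 1) :
    HasSum (fun n => ordinaryHypergeometricCoefficient a b c n * x ^ n) (₂F₁ a b c x) := by
  have := (ordinaryHypergeometricSeries 𝕜 a b c).hasSum
    (by simpa using enorm_lt_radius_ordinaryHypergeometricSeries a b c hc hx)
  simp only [ordinaryHypergeometricSeries_apply_eq, smul_eq_mul] at this
  exact this

theorem differentiableAt_ordinaryHypergeometric (hc : ∀ k : ℕ, (k : 𝕜) ≠ -c) {x : 𝕜}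
    (hx : ‖x‖ < 1) : DifferentiableAt 𝕜 (₂F₁ a b c) x :=
  ((ordinaryHypergeometricSeries 𝕜 a b c).hasFDerivAt_sum
    (enorm_lt_radius_ordinaryHypergeometricSeries a b c hc hx)).differentiableAt

theorem ordinaryHypergeometric_contiguous (hc : ∀ k : ℕ, (k : 𝕜) ≠ -c) {x : 𝕜} (hx : ‖x‖ < 1) :
    (1 - x) * deriv (₂F₁ a b c) x + (c - a - b) * ₂F₁ a b c x
      = (c - a) * (c - b) / c * ₂F₁ a b (c + 1) x := by
  have hc' : ∀ k : ℕ, (k : 𝕜) ≠ -(c + 1) := fun k h =>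
    hc (k + 1) (by push_cast; linear_combination h)
  have hF := hasSum_ordinaryHypergeometric a b c hc hx
  have hF' := hasSum_ordinaryHypergeometric a b (c + 1) hc' hx
  have hD : HasSum (fun n => (n + 1) * ordinaryHypergeometricCoefficient a b c (n + 1) * x ^ n)
      (deriv (₂F₁ a b c) x) :=
    hasSum_deriv_ofScalarsSum (enorm_lt_radius_ordinaryHypergeometricSeries a b c hc hx)
  have hxD : HasSum (fun n => n * ordinaryHypergeometricCoefficient a b c n * x ^ n)
      (x * deriv (₂F₁ a b c) x) := by
    rw [← hasSum_nat_add_iff' 1]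
    simpa [pow_succ, mul_comm, mul_left_comm, mul_assoc] using hD.mul_left x
  rw [sub_mul, one_mul]
  refine ((hD.sub hxD).add (hF.mul_left (c - a - b))).unique
    ((hF'.mul_left ((c - a) * (c - b) / c)).congr_fun fun n => ?_)
  linear_combination x ^ n * ordinaryHypergeometricCoefficient_contiguous a b c hc n

end Hypergeometric

theorem hyp2F1_eq_ordinaryHypergeometric (a b c : ℂ) : hyp2F1 a b c = ₂F₁ a b c := by
  funext x
  rw [ordinaryHypergeometric_eq_tsum]
  refine tsum_congr fun n => ?_
  rw [smul_eq_mul]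
  ring

theorem one_sub_sq_cpow_mul_div_cpow {x : ℝ} (hx : x ∈ Set.Ioo (-1 : ℝ) 1) (m : ℕ) :
    (1 - (x : ℂ) ^ 2) ^ (-(m : ℂ) / 2) * ((1 - x) / (1 + x) : ℂ) ^ ((m : ℂ) / 2)
      = (1 + x : ℂ) ^ (-(m : ℤ)) := by
  obtain ⟨hx₁, hx₂⟩ := hx
  have hu : (0 : ℝ) < 1 - x := by linarith
  have hv : (0 : ℝ) < 1 + x := by linarith
  have hne {y : ℝ} (hy : 0 < y) : (y : ℂ) ^ ((m : ℂ) / 2) ≠ 0 := by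
    rw [Ne, Complex.cpow_eq_zero_iff]
    exact fun h => hy.ne' (by exact_mod_cast h.1)
  have hsq : ((1 + x : ℝ) : ℂ) ^ ((m : ℂ) / 2) * ((1 + x : ℝ) : ℂ) ^ ((m : ℂ) / 2)
      = (1 + x : ℂ) ^ m := by
    rw [← Complex.cpow_add _ _ (by exact_mod_cast hv.ne'), add_halves, Complex.cpow_natCast]
    push_cast
    rfl
  have hprod : 1 - (x : ℂ) ^ 2 = ((1 - x : ℝ) : ℂ) * ((1 + x : ℝ) : ℂ) := by push_cast; ring
  have hquot : ((1 - x) / (1 + x) : ℂ) = ((1 - x : ℝ) : ℂ) / ((1 + x : ℝ) : ℂ) := by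
    push_cast; ring
  rw [hprod, hquot, neg_div, Complex.cpow_neg, Complex.mul_cpow_ofReal_nonneg hu.le hv.le,
    Complex.div_cpow_ofReal_nonneg hu.le hv.le, zpow_neg, zpow_natCast, ← hsq]
  have := hne hu
  have := hne hv
  field_simp

section Legendre

variable (m : ℕ) (lam : ℂ)

noncomputable def legendreCoeff : ℂ :=
  (ascPochhammer ℂ m).eval (-lam) * (ascPochhammer ℂ m).eval (1 + lam) / (m.factorial : ℂ)

noncomputable def PLegWeighted (x : ℝ) : ℂ :=
  (1 - (x : ℂ) ^ 2) ^ (-(m : ℂ) / 2) * PLeg m lam x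

theorem legendreCoeff_succ :
    legendreCoeff (m + 1) lam = legendreCoeff m lam *
      ((1 + m - -lam) * (1 + m - (lam + 1)) / (1 + m)) := by
  have : (1 + m : ℂ) ≠ 0 := by norm_cast; omega
  simp only [legendreCoeff, ascPochhammer_succ_eval, Nat.factorial_succ, Nat.cast_mul,
    Nat.cast_succ]
  field_simp
  ring

theorem PLegWeighted_eq {x : ℝ} (hx : x ∈ Set.Ioo (-1 : ℝ) 1) :
    PLegWeighted m lam x = legendreCoeff m lam * (1 + x : ℂ) ^ (-(m : ℤ)) *
      ₂F₁ (-lam) (lam + 1) (1 + m) ((1 - x : ℂ) / 2) := by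
  rw [PLegWeighted, PLeg, ← one_sub_sq_cpow_mul_div_cpow hx, hyp2F1_eq_ordinaryHypergeometric,
    legendreCoeff]
  push_cast
  ring

theorem hasDerivAt_PLegWeighted {x : ℝ} (hx : x ∈ Set.Ioo (-1 : ℝ) 1) :
    HasDerivAt (PLegWeighted m lam) (-PLegWeighted (m + 1) lam x) x := by
  set a := -lam
  set b := lam + 1
  set c : ℂ := 1 + m
  have hc : ∀ k : ℕ, (k : ℂ) ≠ -c := fun k h => by
    have : ((k + 1 + m : ℕ) : ℂ) = 0 := by push_cast; linear_combination h
    exact absurd (Nat.cast_eq_zero.1 this) (by omega)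
  have ht : ‖(1 - x : ℂ) / 2‖ < 1 := by
    rw [show (1 - x : ℂ) / 2 = ((1 - x) / 2 : ℝ) by push_cast; rfl, Complex.norm_real,
      Real.norm_eq_abs, abs_lt]
    constructor <;> linarith [hx.1, hx.2]
  have hx0 : (1 + x : ℂ) ≠ 0 := by exact_mod_cast (by linarith [hx.1] : (1 + x : ℝ) ≠ 0)
  have hpow := (hasDerivAt_zpow (-(m : ℤ)) _ (Or.inl hx0)).comp_const_add 1 (x : ℂ)
  have hlin : HasDerivAt (fun w : ℂ => (1 - w) / 2) (-1 / 2) x :=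
    (((hasDerivAt_id _).const_sub 1).div_const 2).congr_deriv (by ring)
  have hF : HasDerivAt (fun w : ℂ => ₂F₁ a b c ((1 - w) / 2))
      (deriv (₂F₁ a b c) ((1 - x : ℂ) / 2) * (-1 / 2)) x :=
    (differentiableAt_ordinaryHypergeometric a b c hc ht).hasDerivAt.comp (x : ℂ) hlin
  have hloc : PLegWeighted m lam =ᶠ[𝓝 x] fun y : ℝ =>
      legendreCoeff m lam * ((1 + (y : ℂ)) ^ (-(m : ℤ)) * ₂F₁ a b c ((1 - (y : ℂ)) / 2)) :=
    eventually_of_mem (isOpen_Ioo.mem_nhds hx) fun y hy => by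
      rw [PLegWeighted_eq m lam hy, mul_assoc]
  refine (((hpow.mul hF).const_mul _).comp_ofReal.congr_of_eventuallyEq hloc).congr_deriv ?_
  have hcontig := ordinaryHypergeometric_contiguous a b c hc ht
  have hexp : (1 + x : ℂ) ^ (-(m : ℤ)) = (1 + x : ℂ) ^ (-(m : ℤ) - 1) * (1 + x) := by
    rw [← zpow_add_one₀ hx0, sub_add_cancel]
  rw [PLegWeighted_eq (m + 1) lam hx, legendreCoeff_succ, hexp,
    show (1 + ((m + 1 : ℕ) : ℂ)) = c + 1 by push_cast; ring,
    show -((m + 1 : ℕ) : ℤ) = -(m : ℤ) - 1 by push_cast; ring]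
  push_cast
  linear_combination (-legendreCoeff m lam * (1 + x : ℂ) ^ (-(m : ℤ) - 1)) * hcontig

theorem iteratedDeriv_PLegWeighted (q : ℕ) {x : ℝ} (hx : x ∈ Set.Ioo (-1 : ℝ) 1) :
    iteratedDeriv q (PLegWeighted m lam) x = (-1) ^ q * PLegWeighted (m + q) lam x := by
  induction q generalizing m with
  | zero => simp
  | succ q ih =>
    have hderiv : deriv (PLegWeighted m lam) =ᶠ[𝓝 x] fun y => -PLegWeighted (m + 1) lam y :=
      eventually_of_mem (isOpen_Ioo.mem_nhds hx) fun y hy =>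
        (hasDerivAt_PLegWeighted m lam hy).deriv
    rw [iteratedDeriv_succ', hderiv.iteratedDeriv_eq, iteratedDeriv_fun_neg, ih, pow_succ,
      add_right_comm m 1 q, add_assoc]
    ring

end Legendre

theorem Uop_raises_order (m q : ℕ) (lam : ℂ) (z : ℝ) (hz : z ∈ Set.Ioo (-1 : ℝ) 1) :
    Uop m q (fun x : ℝ => PLeg m lam x) z = PLeg (m + q) lam z := by
  have hz2 : (1 - (z : ℂ) ^ 2) ≠ 0 := by
    exact_mod_cast (by nlinarith [hz.1, hz.2] : (1 - z ^ 2 : ℝ) ≠ 0)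
  have hw : (1 - (z : ℂ) ^ 2) ^ (((m + q : ℕ) : ℂ) / 2) ≠ 0 :=
    fun h => hz2 ((Complex.cpow_eq_zero_iff _ _).1 h).1
  rw [Uop, show (fun x : ℝ => (1 - (x : ℂ) ^ 2) ^ (-(m : ℂ) / 2) * PLeg m lam x)
    = PLegWeighted m lam from rfl, iteratedDeriv_PLegWeighted m lam q hz, PLegWeighted,
    neg_div, Complex.cpow_neg]
  field_simp
  rw [← pow_mul, pow_mul', neg_one_sq, one_pow, one_mul]
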